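/- arXiv:2009.06834 — 4 statements merged into one kernel-verified Lean document; each statement's English description precedes it below -/
import Mathlib

section
/- The map I ↦ {f(0) | f ∈ I} is a bijection from the set of right ideals of the falter monoid onto the set of upper sets of ℝ≥0. (This identifies the subobject classifier of the category of falter-monoid actions with the upward-closed subsets of ℝ≥0.) -/
open scoped NNReal

/-- A stutter: a homeomorphism of `ℝ≥0` onto itself, i.e. a continuous map with a
continuous two-sided inverse. -/
def IsStutter (φ : ℝ≥0 → ℝ≥0) : Prop :=
  Continuous φ ∧ ∃ ψ : ℝ≥0 → ℝ≥0, Continuous ψ ∧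
    Function.LeftInverse ψ φ ∧ Function.RightInverse ψ φ

/-- A falter: a monotone function on `ℝ≥0` such that `x ↦ f x - f 0` is a stutter. -/
def IsFalter (f : ℝ≥0 → ℝ≥0) : Prop :=
  Monotone f ∧ IsStutter (fun x => f x - f 0)

/-- A right ideal of the falter monoid: a set of falters closed under
precomposition with arbitrary falters. -/
def IsFalterRightIdeal (I : Set (ℝ≥0 → ℝ≥0)) : Prop :=
  (∀ f ∈ I, IsFalter f) ∧ ∀ f ∈ I, ∀ g : ℝ≥0 → ℝ≥0, IsFalter g → f ∘ g ∈ I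

lemma inv_monotone {φ ψ : ℝ≥0 → ℝ≥0} (hφ : Monotone φ)
    (h2 : Function.RightInverse ψ φ) : Monotone ψ := by
  intro a b hab
  by_contra h
  push_neg at h
  have h1 : b ≤ a := ((h2 b).symm.trans_le (hφ h.le)).trans_eq (h2 a)
  have : a = b := le_antisymm hab h1
  subst this
  exact lt_irrefl _ h

lemma falter_eq {f : ℝ≥0 → ℝ≥0} (hf : Monotone f) (x : ℝ≥0) :
    (f x - f 0) + f 0 = f x := tsub_add_cancel_of_le (hf ((zero_le : (0:ℝ≥0) ≤ x)))

lemma isFalter_addRight (r : ℝ≥0) : IsFalter (fun x => x + r) := by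
  refine ⟨fun a b h => by simpa using h, ?_⟩
  have he : (fun x : ℝ≥0 => (x + r) - ((0:ℝ≥0) + r)) = id := by
    funext x; simp
  rw [show (fun x : ℝ≥0 => (fun x : ℝ≥0 => x + r) x - (fun x : ℝ≥0 => x + r) 0) =
      (fun x : ℝ≥0 => (x + r) - ((0:ℝ≥0) + r)) from rfl, he]
  exact ⟨continuous_id, id, continuous_id, fun x => rfl, fun x => rfl⟩

lemma IsFalter.continuous {f : ℝ≥0 → ℝ≥0} (hf : IsFalter f) : Continuous f := by
  obtain ⟨hm, hc, _⟩ := hf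
  have : f = fun x => (f x - f 0) + f 0 := by
    funext x; exact (falter_eq hm x).symm
  rw [this]
  exact hc.add continuous_const

lemma IsFalter.comp {f g : ℝ≥0 → ℝ≥0} (hf : IsFalter f) (hg : IsFalter g) :
    IsFalter (f ∘ g) := by
  obtain ⟨hfm, hfc, ψf, hψfc, hψf1, hψf2⟩ := hf
  obtain ⟨hgm, hgc, ψg, hψgc, hψg1, hψg2⟩ := hg
  have hφfm : Monotone (fun x => f x - f 0) := fun a b h => tsub_le_tsub_right (hfm h) _
  have hφgm : Monotone (fun x => g x - g 0) := fun a b h => tsub_le_tsub_right (hgm h) _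
  have hψfm : Monotone ψf := inv_monotone hφfm hψf2
  refine ⟨hfm.comp hgm, ?_⟩
  constructor
  · exact ((IsFalter.continuous ⟨hfm, hfc, ψf, hψfc, hψf1, hψf2⟩).comp
      (IsFalter.continuous ⟨hgm, hgc, ψg, hψgc, hψg1, hψg2⟩)).sub continuous_const
  · refine ⟨fun y => ψg (ψf (y + (f (g 0) - f 0)) - g 0), ?_, ?_, ?_⟩
    · exact hψgc.comp ((hψfc.comp (continuous_add_right _)).sub continuous_const)
    · -- left inverse: θinv (θ x) = x
      intro x
      simp only [Function.comp_apply]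
      rw [tsub_add_tsub_cancel (hfm (hgm ((zero_le : (0:ℝ≥0) ≤ x)))) (hfm ((zero_le : (0:ℝ≥0) ≤ (g 0))))]
      have h2 : ψf (f (g x) - f 0) = g x := hψf1 (g x)
      rw [h2]
      exact hψg1 x
    · -- right inverse: θ (θinv y) = y
      intro y
      simp only [Function.comp_apply]
      set s := ψf (y + (f (g 0) - f 0)) with hs
      have hsge : g 0 ≤ s := by
        have : ψf (f (g 0) - f 0) ≤ s := hψfm le_add_self
        rwa [hψf1 (g 0)] at this
      have h4 : g (ψg (s - g 0)) = s := by
        have := hψg2 (s - g 0)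
        -- (fun x => g x - g 0) (ψg (s - g 0)) = s - g 0
        have h5 : g (ψg (s - g 0)) - g 0 = s - g 0 := this
        have h6 : g 0 ≤ g (ψg (s - g 0)) := hgm (zero_le)
        calc g (ψg (s - g 0)) = (g (ψg (s - g 0)) - g 0) + g 0 := (tsub_add_cancel_of_le h6).symm
          _ = (s - g 0) + g 0 := by rw [h5]
          _ = s := tsub_add_cancel_of_le hsge
      rw [h4]
      have h7 : f s - f 0 = y + (f (g 0) - f 0) := hψf2 _
      have h8 : f s - f (g 0) = (f s - f 0) - (f (g 0) - f 0) :=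
        (tsub_tsub_tsub_cancel_right (hfm (zero_le))).symm
      rw [h8, h7]
      exact add_tsub_cancel_right y _

lemma falter_factor {f h : ℝ≥0 → ℝ≥0} (hf : IsFalter f) (hh : IsFalter h)
    (e : h 0 = f 0) : ∃ g, IsFalter g ∧ h ∘ g = f := by
  obtain ⟨hfm, hfc, ψf, hψfc, hψf1, hψf2⟩ := hf
  obtain ⟨hhm, hhc, ψh, hψhc, hψh1, hψh2⟩ := hh
  have hφfm : Monotone (fun x => f x - f 0) := fun a b hab => tsub_le_tsub_right (hfm hab) _
  have hφhm : Monotone (fun x => h x - h 0) := fun a b hab => tsub_le_tsub_right (hhm hab) _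
  have hψhm : Monotone ψh := inv_monotone hφhm hψh2
  refine ⟨fun x => ψh (f x - f 0), ⟨?_, ?_⟩, ?_⟩
  · exact fun a b hab => hψhm (hφfm hab)
  · have hg0 : ψh ((f 0 : ℝ≥0) - f 0) = 0 := by
      rw [tsub_self]
      have := hψh1 0
      simpa using this
    have heq : (fun x => ψh (f x - f 0) - ψh (f 0 - f 0)) = fun x => ψh (f x - f 0) := by
      funext x; rw [hg0, tsub_zero]
    rw [heq]
    refine ⟨hψhc.comp (hfc), fun y => ψf (h y - h 0), ?_, ?_, ?_⟩
    · exact hψfc.comp hhc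
    · intro x
      show ψf (h (ψh (f x - f 0)) - h 0) = x
      have h1 : h (ψh (f x - f 0)) - h 0 = f x - f 0 := hψh2 _
      rw [h1]
      exact hψf1 x
    · intro y
      show ψh (f (ψf (h y - h 0)) - f 0) = y
      have h1 : f (ψf (h y - h 0)) - f 0 = h y - h 0 := hψf2 _
      rw [h1]
      exact hψh1 y
  · funext x
    simp only [Function.comp_apply]
    have h1 : h (ψh (f x - f 0)) - h 0 = f x - f 0 := hψh2 _
    have h2 : h 0 ≤ h (ψh (f x - f 0)) := hhm (zero_le)
    calc h (ψh (f x - f 0)) = (h (ψh (f x - f 0)) - h 0) + h 0 :=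
          (tsub_add_cancel_of_le h2).symm
      _ = (f x - f 0) + f 0 := by rw [h1, e]
      _ = f x := tsub_add_cancel_of_le (hfm ((zero_le : (0:ℝ≥0) ≤ x)))

lemma ideal_subset {I J : Set (ℝ≥0 → ℝ≥0)} (hI : IsFalterRightIdeal I)
    (hJ : IsFalterRightIdeal J)
    (h : {r : ℝ≥0 | ∃ f ∈ I, f 0 = r} ⊆ {r : ℝ≥0 | ∃ f ∈ J, f 0 = r}) : I ⊆ J := by
  intro f hf
  have hmem : f 0 ∈ {r : ℝ≥0 | ∃ f ∈ J, f 0 = r} := h ⟨f, hf, rfl⟩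
  obtain ⟨h0, hh0J, e⟩ := hmem
  obtain ⟨g, hg, hge⟩ := falter_factor (hI.1 f hf) (hJ.1 _ hh0J) e
  rw [← hge]
  exact hJ.2 _ hh0J g hg

/-- `I ↦ {f 0 | f ∈ I}` is a bijection from the right ideals of the falter monoid
onto the upper sets of `ℝ≥0`. -/
theorem falter_ideals_biject_upper_sets :
    Set.BijOn (fun I : Set (ℝ≥0 → ℝ≥0) => {r : ℝ≥0 | ∃ f ∈ I, f 0 = r})
      {I | IsFalterRightIdeal I} {U : Set ℝ≥0 | IsUpperSet U} := by
  refine ⟨?_, ?_, ?_⟩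
  · -- MapsTo
    intro I hI
    intro a b hab ha
    obtain ⟨f, hfI, hf0⟩ := ha
    have hf := hI.1 f hfI
    obtain ⟨hfm, hfc, ψf, hψfc, hψf1, hψf2⟩ := hf
    set s := ψf (b - f 0) with hs
    have hfs : f s = b := by
      have h1 : f s - f 0 = b - f 0 := hψf2 _
      have h2 : f 0 ≤ f s := hfm (zero_le)
      calc f s = (f s - f 0) + f 0 := (tsub_add_cancel_of_le h2).symm
        _ = (b - f 0) + f 0 := by rw [h1]
        _ = b := tsub_add_cancel_of_le (hf0 ▸ hab)
    refine ⟨f ∘ (fun x => x + s), hI.2 f hfI _ (isFalter_addRight s), ?_⟩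
    simp [hfs]
  · -- InjOn
    intro I hI J hJ h
    exact le_antisymm (ideal_subset hI hJ h.le) (ideal_subset hJ hI h.ge)
  · -- SurjOn
    intro U hU
    refine ⟨{f | IsFalter f ∧ f 0 ∈ U}, ⟨fun f hf => hf.1, ?_⟩, ?_⟩
    · intro f hf g hg
      exact ⟨hf.1.comp hg, hU (hf.1.1 ((zero_le : (0:ℝ≥0) ≤ (g 0)))) hf.2⟩
    · ext r
      constructor
      · rintro ⟨f, ⟨_, hf0U⟩, rfl⟩
        exact hf0U
      · intro hr
        exact ⟨fun x => x + r, ⟨isFalter_addRight r, by simpa using hr⟩, by simp⟩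
end

section
/- If f : ℝ≥0 → S is a non-Zeno function and g : ℝ≥0 → ℝ≥0 is a falter, then f ∘ g is a non-Zeno function. (Hence the non-Zeno functions over S form an action of the falter monoid, and in particular of the stutter group, by precomposition.) -/
open scoped NNReal

/-- A non-Zeno function: each state is held for positive time, and there is no
bounded strictly increasing sequence of times at which the state keeps changing. -/
def NonZeno {S : Type*} (f : ℝ≥0 → S) : Prop :=
  (∀ t : ℝ≥0, ∃ ε : ℝ≥0, 0 < ε ∧ ∀ t', t ≤ t' → t' < t + ε → f t' = f t) ∧
  ¬ ∃ u : ℕ → ℝ≥0, StrictMono u ∧ BddAbove (Set.range u) ∧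
      ∀ i : ℕ, f (u i) ≠ f (u (i + 1))

/-- Precomposition with a falter preserves the non-Zeno property; hence the
non-Zeno functions carry an action of the falter monoid (and in particular of the
stutter group) by precomposition. -/
theorem nonZeno_comp_falter {S : Type*} (f : ℝ≥0 → S) (g : ℝ≥0 → ℝ≥0)
    (hf : NonZeno f) (hg : IsFalter g) : NonZeno (f ∘ g) := by
  obtain ⟨hmono, hφc, ψ, hψc, hli, hri⟩ := hg
  have hle : ∀ x, g 0 ≤ g x := fun x => hmono (zero_le : (0 : ℝ≥0) ≤ x)
  have hgeq : ∀ x, g x = (g x - g 0) + g 0 := fun x => (tsub_add_cancel_of_le (hle x)).symm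
  have hgc : Continuous g := by
    have h : Continuous (fun x => (g x - g 0) + g 0) := hφc.add continuous_const
    convert h using 1
    funext x; exact hgeq x
  have hinj : Function.Injective g := by
    intro x y hxy
    have h2 : g x - g 0 = g y - g 0 := by rw [hxy]
    exact hli.injective h2
  have hsm : StrictMono g := hmono.strictMono_of_injective hinj
  constructor
  · intro t
    obtain ⟨δ, hδ, hδprop⟩ := hf.1 (g t)
    have hopen : {x : ℝ≥0 | g x < g t + δ} ∈ nhds t := by
      have : IsOpen {x : ℝ≥0 | g x < g t + δ} := isOpen_lt hgc continuous_const
      exact this.mem_nhds (lt_add_of_pos_right _ hδ)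
    obtain ⟨v, hv, hsub⟩ := exists_Ico_subset_of_mem_nhds hopen ⟨t + 1, lt_add_of_pos_right _ one_pos⟩
    refine ⟨v - t, tsub_pos_of_lt hv, fun t' ht1 ht2 => ?_⟩
    have ht2' : t' < v := by
      have := ht2
      rwa [add_tsub_cancel_of_le hv.le] at this
    exact hδprop (g t') (hmono ht1) (hsub ⟨ht1, ht2'⟩)
  · rintro ⟨u, hu, ⟨M, hM⟩, hne⟩
    exact hf.2 ⟨g ∘ u, hsm.comp hu, ⟨g M, by rintro _ ⟨i, rfl⟩; exact hmono (hM ⟨i, rfl⟩)⟩, hne⟩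
end

section
/- A non-Zeno function visits only finitely many states in any finite length of time: if f : ℝ≥0 → S is non-Zeno, then for every T ∈ ℝ≥0 the image f([0, T]) = {f(t) | 0 ≤ t ≤ T} is a finite set. -/
open scoped NNReal

/-- A non-Zeno function visits only finitely many states in any finite length of
time: the image of `[0, T]` is finite. -/
theorem nonZeno_finite_image {S : Type*} (f : ℝ≥0 → S) (hf : NonZeno f)
    (T : ℝ≥0) : (f '' Set.Icc 0 T).Finite := by
  obtain ⟨h1, h2⟩ := hf
  by_contra hinf
  set A : Set ℝ≥0 := {t | t ≤ T ∧ (f '' Set.Icc 0 t).Finite} with hA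
  have h0A : (0 : ℝ≥0) ∈ A := ⟨zero_le, by simp⟩
  have hAne : A.Nonempty := ⟨0, h0A⟩
  set s := sSup A with hs
  have hsT : s ≤ T := csSup_le hAne fun a ha => ha.1
  have hlt : ∀ t, t < s → (f '' Set.Icc 0 t).Finite := by
    intro t ht
    obtain ⟨a, haA, hta⟩ := exists_lt_of_lt_csSup hAne ht
    exact haA.2.subset (Set.image_mono (Set.Icc_subset_Icc_right hta.le))
  have hsfin : (f '' Set.Icc 0 s).Finite := by
    by_contra hfin
    have hne : (f '' Set.Ico 0 s).Infinite := by
      intro hfi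
      apply hfin
      refine (hfi.union (Set.finite_singleton (f s))).subset ?_
      rintro y ⟨x, hx, rfl⟩
      rcases lt_or_eq_of_le hx.2 with h | h
      · exact Or.inl ⟨x, ⟨hx.1, h⟩, rfl⟩
      · exact Or.inr (by simp [h])
    have hs0 : (0 : ℝ≥0) < s := by
      rcases hne.nonempty with ⟨y, x, hx, rfl⟩
      exact lt_of_le_of_lt hx.1 hx.2
    have hstep : ∀ t : {t : ℝ≥0 // t < s}, ∃ t' : {t : ℝ≥0 // t < s},
        t.1 < t'.1 ∧ f t'.1 ≠ f t.1 := by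
      rintro ⟨t, ht⟩
      have hfin' := hlt t ht
      obtain ⟨y, hy⟩ := (hne.diff hfin').nonempty
      obtain ⟨⟨x, hx, rfl⟩, hny⟩ := hy
      have htx : t < x := by
        by_contra h
        push_neg at h
        exact hny ⟨x, ⟨hx.1, h⟩, rfl⟩
      refine ⟨⟨x, hx.2⟩, htx, fun h => hny ⟨t, ⟨zero_le, le_refl t⟩, h.symm⟩⟩
    choose g hg1 hg2 using hstep
    set u : ℕ → {t : ℝ≥0 // t < s} := fun n => g^[n] ⟨0, hs0⟩ with hu
    apply h2
    refine ⟨fun n => (u n).1, ?_, ⟨s, ?_⟩, ?_⟩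
    · apply strictMono_nat_of_lt_succ
      intro n
      have : u (n + 1) = g (u n) := Function.iterate_succ_apply' g n _
      rw [this]
      exact hg1 _
    · rintro y ⟨n, rfl⟩
      exact (u n).2.le
    · intro i
      show f (u i).1 ≠ f (u (i + 1)).1
      have : u (i + 1) = g (u i) := Function.iterate_succ_apply' g i _
      rw [this]
      exact (hg2 (u i)).symm
  have hsA : s ∈ A := ⟨hsT, hsfin⟩
  rcases lt_or_eq_of_le hsT with h | h
  · obtain ⟨ε, hε, hconst⟩ := h1 s
    set t := min (s + ε / 2) T with ht
    have hst : s < t := by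
      apply lt_min _ h
      have : (0 : ℝ≥0) < ε / 2 := by positivity
      exact lt_add_of_pos_right s this
    have htA : t ∈ A := by
      refine ⟨min_le_right _ _, ?_⟩
      have hsub : f '' Set.Icc 0 t ⊆ f '' Set.Icc 0 s ∪ {f s} := by
        rintro y ⟨x, hx, rfl⟩
        rcases le_or_gt x s with h' | h'
        · exact Or.inl ⟨x, ⟨hx.1, h'⟩, rfl⟩
        · right
          have hxlt : x < s + ε := by
            calc x ≤ t := hx.2
            _ ≤ s + ε / 2 := min_le_left _ _
            _ < s + ε := by
                have : ε / 2 < ε := by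
                  exact NNReal.half_lt_self hε.ne'
                exact add_lt_add_right this s
          simp [hconst x h'.le hxlt]
      exact (hsfin.union (Set.finite_singleton (f s))).subset hsub
    exact absurd (le_csSup ⟨T, fun a ha => ha.1⟩ htA) (not_le_of_gt hst)
  · exact hinf (h ▸ hsfin)
end

section
/- Discrete stuttering equivalence is an equivalence relation on the set of behaviors ℕ → S: it is reflexive, symmetric, and transitive. -/
/-- Discrete stuttering equivalence: two behaviors `ρ₁ ρ₂ : ℕ → S` are stuttering
equivalent if there are monotone surjections `φ₁ φ₂ : ℕ → ℕ` with
`ρ₁ ∘ φ₁ = ρ₂ ∘ φ₂`. -/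
def StutterEquiv {S : Type*} (ρ₁ ρ₂ : ℕ → S) : Prop :=
  ∃ φ₁ φ₂ : ℕ → ℕ, Monotone φ₁ ∧ Monotone φ₂ ∧
    Function.Surjective φ₁ ∧ Function.Surjective φ₂ ∧ ρ₁ ∘ φ₁ = ρ₂ ∘ φ₂

private lemma mono_surj_zero {f : ℕ → ℕ} (hf : Monotone f)
    (hfs : Function.Surjective f) : f 0 = 0 := by
  obtain ⟨n, hn⟩ := hfs 0
  have := hf (Nat.zero_le n)
  omega

private lemma mono_surj_step {f : ℕ → ℕ} (hf : Monotone f)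
    (hfs : Function.Surjective f) (n : ℕ) : f (n + 1) ≤ f n + 1 := by
  by_contra h
  push_neg at h
  obtain ⟨m, hm⟩ := hfs (f n + 1)
  rcases le_or_gt m n with h1 | h1
  · have := hf h1; omega
  · have := hf (show n + 1 ≤ m by omega); omega

private lemma surj_of {f : ℕ → ℕ} (h0 : f 0 = 0)
    (hstep : ∀ n, f (n + 1) ≤ f n + 1) (hmono : Monotone f)
    (hub : ∀ m, ∃ n, m ≤ f n) : Function.Surjective f := by
  intro m
  obtain ⟨n, hn⟩ := hub m
  clear hub
  induction n with
  | zero => exact ⟨0, by omega⟩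
  | succ n ih =>
    rcases le_or_gt m (f n) with h | h
    · exact ih h
    · have h1 := hstep n
      have h2 := hmono (Nat.le_succ n)
      exact ⟨n + 1, by omega⟩

private lemma pullback {f g : ℕ → ℕ} (hf : Monotone f) (hg : Monotone g)
    (hfs : Function.Surjective f) (hgs : Function.Surjective g) :
    ∃ α β : ℕ → ℕ, Monotone α ∧ Monotone β ∧
      Function.Surjective α ∧ Function.Surjective β ∧ f ∘ α = g ∘ β := by
  classical
  let step : ℕ × ℕ → ℕ × ℕ := fun p =>
    if f (p.1 + 1) = f p.1 then (p.1 + 1, p.2)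
    else if g (p.2 + 1) = g p.2 then (p.1, p.2 + 1)
    else (p.1 + 1, p.2 + 1)
  let P : ℕ → ℕ × ℕ := fun k => step^[k] (0, 0)
  let α : ℕ → ℕ := fun k => (P k).1
  let β : ℕ → ℕ := fun k => (P k).2
  have hPsucc : ∀ k, P (k + 1) = step (P k) := fun k =>
    Function.iterate_succ_apply' _ _ _
  have hα0 : α 0 = 0 := rfl
  have hβ0 : β 0 = 0 := rfl
  -- case analysis on one step
  have hcases : ∀ k,
      (f (α k + 1) = f (α k) ∧ α (k + 1) = α k + 1 ∧ β (k + 1) = β k) ∨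
      (¬ f (α k + 1) = f (α k) ∧ g (β k + 1) = g (β k) ∧
        α (k + 1) = α k ∧ β (k + 1) = β k + 1) ∨
      (¬ f (α k + 1) = f (α k) ∧ ¬ g (β k + 1) = g (β k) ∧
        α (k + 1) = α k + 1 ∧ β (k + 1) = β k + 1) := by
    intro k
    by_cases h1 : f ((P k).1 + 1) = f (P k).1
    · left
      refine ⟨h1, ?_, ?_⟩ <;>
        simp only [α, β, hPsucc k, step, if_pos h1]
    · by_cases h2 : g ((P k).2 + 1) = g (P k).2
      · right; left
        refine ⟨h1, h2, ?_, ?_⟩ <;>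
          simp only [α, β, hPsucc k, step, if_neg h1, if_pos h2]
      · right; right
        refine ⟨h1, h2, ?_, ?_⟩ <;>
          simp only [α, β, hPsucc k, step, if_neg h1, if_neg h2]
  -- invariant
  have hinv : ∀ k, f (α k) = g (β k) := by
    intro k
    induction k with
    | zero =>
      rw [hα0, hβ0, mono_surj_zero hf hfs, mono_surj_zero hg hgs]
    | succ k ih =>
      have hfk := mono_surj_step hf hfs (α k)
      have hgk := mono_surj_step hg hgs (β k)
      have hfm := hf (show α k ≤ α k + 1 by omega)
      have hgm := hg (show β k ≤ β k + 1 by omega)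
      rcases hcases k with ⟨h1, h2, h3⟩ | ⟨h1, h2, h3, h4⟩ | ⟨h1, h2, h3, h4⟩
      · rw [h2, h3, h1, ih]
      · rw [h3, h4, h2, ih]
      · rw [h3, h4]; omega
  have hαstep : ∀ k, α (k + 1) = α k ∨ α (k + 1) = α k + 1 := by
    intro k
    rcases hcases k with ⟨_, h2, _⟩ | ⟨_, _, h3, _⟩ | ⟨_, _, h3, _⟩ <;> omega
  have hβstep : ∀ k, β (k + 1) = β k ∨ β (k + 1) = β k + 1 := by
    intro k
    rcases hcases k with ⟨_, _, h3⟩ | ⟨_, _, _, h4⟩ | ⟨_, _, _, h4⟩ <;> omega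
  have hαmono : Monotone α := monotone_nat_of_le_succ fun k => by
    rcases hαstep k with h | h <;> omega
  have hβmono : Monotone β := monotone_nat_of_le_succ fun k => by
    rcases hβstep k with h | h <;> omega
  -- if α is stuck, β moves with g constant
  have hαstuck : ∀ k, α (k + 1) = α k →
      β (k + 1) = β k + 1 ∧ g (β (k + 1)) = g (β k) := by
    intro k hk
    rcases hcases k with ⟨_, h2, _⟩ | ⟨_, h2, _, h4⟩ | ⟨_, _, h3, _⟩
    · omega
    · exact ⟨h4, by rw [h4, h2]⟩
    · omega
  have hβstuck : ∀ k, β (k + 1) = β k →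
      α (k + 1) = α k + 1 ∧ f (α (k + 1)) = f (α k) := by
    intro k hk
    rcases hcases k with ⟨h1, h2, _⟩ | ⟨_, _, _, h4⟩ | ⟨_, _, _, h4⟩
    · exact ⟨h2, by rw [h2, h1]⟩
    · omega
    · omega
  -- α unbounded
  have hαub : ∀ m, ∃ k, m ≤ α k := by
    intro m
    induction m with
    | zero => exact ⟨0, Nat.zero_le _⟩
    | succ m ih =>
      obtain ⟨k, hk⟩ := ih
      obtain ⟨n, hn⟩ := hgs (g (β k) + 1)
      have hnβ : β k < n := by
        by_contra h
        push_neg at h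
        have := hg h
        omega
      have key : ∀ t, (∀ s, s ≤ t → α (k + s) = α k) →
          β (k + t) = β k + t ∧ g (β (k + t)) = g (β k) := by
        intro t
        induction t with
        | zero => simp
        | succ t iht =>
          intro hall
          have h1 := iht (fun s hs => hall s (hs.trans (Nat.le_succ t)))
          have h2 : α (k + t + 1) = α (k + t) := by
            rw [show k + t + 1 = k + (t + 1) by ring, hall (t + 1) le_rfl,
              hall t (Nat.le_succ t)]
          obtain ⟨h3, h4⟩ := hαstuck (k + t) h2
          constructor
          · rw [show k + (t + 1) = k + t + 1 by ring, h3, h1.1]; ring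
          · rw [show k + (t + 1) = k + t + 1 by ring, h4, h1.2]
      by_cases hall : ∀ s, s ≤ n - β k → α (k + s) = α k
      · obtain ⟨h1, h2⟩ := key (n - β k) hall
        have : β k + (n - β k) = n := by omega
        rw [this] at h1
        rw [h1] at h2
        omega
      · push_neg at hall
        obtain ⟨s, hs1, hs2⟩ := hall
        have : α k ≤ α (k + s) := hαmono (Nat.le_add_right k s)
        exact ⟨k + s, by omega⟩
  -- β unbounded
  have hβub : ∀ m, ∃ k, m ≤ β k := by
    intro m
    induction m with
    | zero => exact ⟨0, Nat.zero_le _⟩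
    | succ m ih =>
      obtain ⟨k, hk⟩ := ih
      obtain ⟨n, hn⟩ := hfs (f (α k) + 1)
      have hnα : α k < n := by
        by_contra h
        push_neg at h
        have := hf h
        omega
      have key : ∀ t, (∀ s, s ≤ t → β (k + s) = β k) →
          α (k + t) = α k + t ∧ f (α (k + t)) = f (α k) := by
        intro t
        induction t with
        | zero => simp
        | succ t iht =>
          intro hall
          have h1 := iht (fun s hs => hall s (hs.trans (Nat.le_succ t)))
          have h2 : β (k + t + 1) = β (k + t) := by
            rw [show k + t + 1 = k + (t + 1) by ring, hall (t + 1) le_rfl,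
              hall t (Nat.le_succ t)]
          obtain ⟨h3, h4⟩ := hβstuck (k + t) h2
          constructor
          · rw [show k + (t + 1) = k + t + 1 by ring, h3, h1.1]; ring
          · rw [show k + (t + 1) = k + t + 1 by ring, h4, h1.2]
      by_cases hall : ∀ s, s ≤ n - α k → β (k + s) = β k
      · obtain ⟨h1, h2⟩ := key (n - α k) hall
        have : α k + (n - α k) = n := by omega
        rw [this] at h1
        rw [h1] at h2
        omega
      · push_neg at hall
        obtain ⟨s, hs1, hs2⟩ := hall
        have : β k ≤ β (k + s) := hβmono (Nat.le_add_right k s)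
        exact ⟨k + s, by omega⟩
  refine ⟨α, β, hαmono, hβmono, ?_, ?_, funext fun k => hinv k⟩
  · exact surj_of hα0 (fun k => by rcases hαstep k with h | h <;> omega) hαmono hαub
  · exact surj_of hβ0 (fun k => by rcases hβstep k with h | h <;> omega) hβmono hβub

/-- Discrete stuttering equivalence is an equivalence relation on behaviors. -/
theorem stutterEquiv_equivalence (S : Type*) :
    Equivalence (@StutterEquiv S) := by
  constructor
  · intro ρ
    exact ⟨id, id, monotone_id, monotone_id, Function.surjective_id,
      Function.surjective_id, rfl⟩
  · rintro ρ₁ ρ₂ ⟨φ₁, φ₂, h1, h2, h3, h4, h5⟩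
    exact ⟨φ₂, φ₁, h2, h1, h4, h3, h5.symm⟩
  · rintro ρ₁ ρ₂ ρ₃ ⟨φ₁, φ₂, hm1, hm2, hs1, hs2, heq1⟩
      ⟨ψ₂, ψ₃, hm2', hm3, hs2', hs3, heq2⟩
    obtain ⟨a, b, hma, hmb, hsa, hsb, hab⟩ := pullback hm2 hm2' hs2 hs2'
    refine ⟨φ₁ ∘ a, ψ₃ ∘ b, hm1.comp hma, hm3.comp hmb,
      hs1.comp hsa, hs3.comp hsb, ?_⟩
    calc ρ₁ ∘ (φ₁ ∘ a) = (ρ₁ ∘ φ₁) ∘ a := rfl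
      _ = (ρ₂ ∘ φ₂) ∘ a := by rw [heq1]
      _ = ρ₂ ∘ (φ₂ ∘ a) := rfl
      _ = ρ₂ ∘ (ψ₂ ∘ b) := by rw [hab]
      _ = (ρ₂ ∘ ψ₂) ∘ b := rfl
      _ = (ρ₃ ∘ ψ₃) ∘ b := by rw [heq2]
      _ = ρ₃ ∘ (ψ₃ ∘ b) := rfl
end
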